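/- Let Q be a set of entailments satisfying EP-1, EP-4, and EP-5. If p ⊢ ᾱ[a] ∈ Q and q is a Q-preantecedent with p ⊑ q and p_α = q_α, then q ⊢ ᾱ[a] ∈ Q. -/

import Mathlib

/-!
STATEMENT 10: if `Q` satisfies EP-1, EP-4 and EP-5, `p ⊢ ᾱ[a] ∈ Q`, and `q` is
a `Q`-preantecedent with `p ⊑ q` and `p α = q α`, then `q ⊢ ᾱ[a] ∈ Q`.
-/

namespace Stmt10

/-- Protocols over a set of atoms `At`: atoms, coproducts and products of
finite families (events are represented by positions in the list). -/
inductive Proto (At : Type) : Type where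
  | atom : At → Proto At
  | sum : List (Proto At) → Proto At
  | prod : List (Proto At) → Proto At

/-- The three roles a protocol state may have. -/
inductive Role : Type where
  | src  -- source role 0
  | snk  -- sink role 1
  | flow -- flow role +
deriving DecidableEq

/-- Interchanging the source and sink roles. -/
def Role.swap : Role → Role
  | .src => .snk
  | .snk => .src
  | .flow => .flow

/-- The role of a coproduct state, from the roles of its components. -/
def sumRole (rs : List Role) : Role :=
  if ∀ r ∈ rs, r = Role.src then .src
  else if rs.count Role.snk = 1 ∧ rs.count Role.flow = 0 then .snk
  else .flow

/-- The role of a product state, from the roles of its components. -/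
def prodRole (rs : List Role) : Role :=
  if ∀ r ∈ rs, r = Role.snk then .snk
  else if rs.count Role.src = 1 ∧ rs.count Role.flow = 0 then .src
  else .flow

mutual
/-- The role of a protocol state on a domain channel. -/
def roleD {At : Type} : Proto At → Role
  | .atom _ => .flow
  | .sum Xs => sumRole (rolesD Xs)
  | .prod Xs => prodRole (rolesD Xs)

def rolesD {At : Type} : List (Proto At) → List Role
  | [] => []
  | X :: Xs => roleD X :: rolesD Xs
end

/-- A channel is either a domain channel or a codomain channel. -/
inductive Side : Type where
  | dom
  | cod
deriving DecidableEq

/-- The role of a protocol state on a channel of the given side (codomain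
roles are computed dually). -/
def role {At : Type} : Side → Proto At → Role
  | .dom, X => roleD X
  | .cod, X => (roleD X).swap

/-- Directions of events: input or output. -/
inductive Dir : Type where
  | inp
  | out
deriving DecidableEq

def Dir.flip : Dir → Dir
  | .inp => .out
  | .out => .inp

/-- An event: a direction together with the position of the selected
component. -/
abbrev Ev : Type := Dir × ℕ

/-- The subprotocol reached by a transition along event `i`. -/
def Proto.next {At : Type} : Proto At → ℕ → Option (Proto At)
  | .atom _, _ => none
  | .sum Xs, i => Xs[i]?
  | .prod Xs, i => Xs[i]?

/-- The direction of events a protocol state expects, on a channel of the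
given side (coproducts expect inputs on domain channels and outputs on
codomain channels; products dually). -/
def expects {At : Type} (s : Side) : Proto At → Option Dir
  | .sum _ => some (match s with | .dom => .inp | .cod => .out)
  | .prod _ => some (match s with | .dom => .out | .cod => .inp)
  | .atom _ => none

/-- A legal transition of a protocol state on a channel of side `s`: it starts
at a state with flow role, has the direction the state expects, and an output
transition does not end at a sink-role state while an input transition does
not end at a source-role state. -/
def StepP {At : Type} (s : Side) (P : Proto At) (e : Ev) (P' : Proto At) : Prop :=
  role s P = .flow ∧ expects s P = some e.1 ∧ P.next e.2 = some P' ∧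
    (e.1 = Dir.out → role s P' ≠ .snk) ∧ (e.1 = Dir.inp → role s P' ≠ .src)

/-- A legal channel behaviour: a finite sequence of legal transitions,
reaching the indicated state. -/
inductive StepsP {At : Type} (s : Side) : Proto At → List Ev → Proto At → Prop where
  | nil (P : Proto At) : StepsP s P [] P
  | cons {P P' P'' : Proto At} {e : Ev} {l : List Ev} :
      StepP s P e P' → StepsP s P' l P'' → StepsP s P (e :: l) P''

def Proto.IsAtom {At : Type} : Proto At → Prop
  | .atom _ => True
  | _ => False

/-- A finite family of channels, each assigned a protocol and partitioned
into domain channels and codomain channels. -/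
structure Setting (At Chan : Type) where
  active : Set Chan
  finite : active.Finite
  side : Chan → Side
  proto : Chan → Proto At

/-- A behaviour: a tuple of channel behaviours, one per channel. -/
abbrev Behav (Chan : Type) : Type := Chan → List Ev

variable {At Chan M : Type}

/-- The behaviour `p` reaches the frontier state `P` on channel `c`. -/
def Setting.Reaches (S : Setting At Chan) (p : Behav Chan) (c : Chan) (P : Proto At) : Prop :=
  StepsP (S.side c) (S.proto c) (p c) P

/-- `p` is a legal behaviour for the setting `S`. -/
def Setting.IsBehav (S : Setting At Chan) (p : Behav Chan) : Prop :=
  (∀ c ∉ S.active, p c = []) ∧ ∀ c ∈ S.active, ∃ P, S.Reaches p c P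

/-- An antecedent behaviour: every frontier state has flow or sink role. -/
def Setting.Antecedent (S : Setting At Chan) (p : Behav Chan) : Prop :=
  S.IsBehav p ∧ ∀ c ∈ S.active, ∀ P, S.Reaches p c P → role (S.side c) P ≠ .src

/-- A saturated behaviour: every frontier state is atomic, has sink role,
or is an output state with flow role. -/
def Setting.Saturated (S : Setting At Chan) (p : Behav Chan) : Prop :=
  S.IsBehav p ∧ ∀ c ∈ S.active, ∀ P, S.Reaches p c P →
    P.IsAtom ∨ role (S.side c) P = .snk ∨
      (expects (S.side c) P = some Dir.out ∧ role (S.side c) P = .flow)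

/-- `p ⊑ q`: componentwise prefix of behaviours. -/
def BPrefix (p q : Behav Chan) : Prop := ∀ c, p c <+: q c

/-- `p ⊑_i q`: `p` is a prefix of `q` and all intervening events are inputs. -/
def BPrefixI (p q : Behav Chan) : Prop :=
  ∀ c, ∃ r : List Ev, q c = p c ++ r ∧ ∀ e ∈ r, e.1 = Dir.inp

/-- Compatibility `p ⌣ q` of behaviours. -/
def Compat (p q : Behav Chan) : Prop := ∀ c, p c <+: q c ∨ q c <+: p c

/-- The join `p ⊔ q` of (compatible) behaviours: the longer component on each
channel. -/
def bjoin (p q : Behav Chan) : Behav Chan :=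
  fun c => if (p c).length ≤ (q c).length then q c else p c

/-- The empty behaviour. -/
def emptyB : Behav Chan := fun _ => []

/-- `p * e` on channel `c`: append the event `e` at the end of the channel
behaviour of `c`. -/
def bapp [DecidableEq Chan] (p : Behav Chan) (c : Chan) (e : Ev) : Behav Chan :=
  Function.update p c (p c ++ [e])

/-- `e * p` on channel `c`: prepend the event `e` at the beginning of the
channel behaviour of `c`. -/
def bpre [DecidableEq Chan] (c : Chan) (e : Ev) (p : Behav Chan) : Behav Chan :=
  Function.update p c (e :: p c)

/-- The conclusion of an entailment: an output event `ᾱ[a]` or an atomic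
morphism. -/
inductive Concl (Chan M : Type) : Type where
  | out : Chan → ℕ → Concl Chan M
  | mor : M → Concl Chan M

/-- An entailment: an antecedent behaviour together with a conclusion. -/
abbrev Ent (Chan M : Type) : Type := Behav Chan × Concl Chan M

/-- The event `e` is a legal next event on channel `c` given the behaviour
`p`. -/
def Setting.CanStep (S : Setting At Chan) (p : Behav Chan) (c : Chan) (e : Ev) : Prop :=
  ∃ P P', S.Reaches p c P ∧ StepP (S.side c) P e P'

/-- Validity of an entailment: the antecedent is an antecedent behaviour and
the conclusion is a legal output event, resp. an atomic morphism on the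
(all-atomic) frontier. -/
def Setting.ValidEnt (S : Setting At Chan) : Ent Chan M → Prop
  | (p, .out α a) => S.Antecedent p ∧ α ∈ S.active ∧ S.CanStep p α (Dir.out, a)
  | (p, .mor _) => S.Antecedent p ∧ ∀ c ∈ S.active, ∃ A, S.Reaches p c (.atom A)

/-- A set of entailments. -/
def EntSet (S : Setting At Chan) (Q : Set (Ent Chan M)) : Prop :=
  ∀ e ∈ Q, S.ValidEnt e

/-- All output events occurring in `p` are `Q`-justified. -/
def Justified [DecidableEq Chan] (S : Setting At Chan) (Q : Set (Ent Chan M))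
    (p : Behav Chan) : Prop :=
  ∀ c ∈ S.active, ∀ (l : List Ev) (a : ℕ) (r : List Ev), p c = l ++ (Dir.out, a) :: r →
    ∃ u : Behav Chan, (u, Concl.out c a) ∈ Q ∧ u c = l ∧ BPrefix (bapp u c (Dir.out, a)) p

/-- A `Q`-preantecedent: a `Q`-justified antecedent behaviour. -/
def Preant [DecidableEq Chan] (S : Setting At Chan) (Q : Set (Ent Chan M))
    (p : Behav Chan) : Prop :=
  S.Antecedent p ∧ Justified S Q p

/-- A `Q`-antecedent: the antecedent of some entailment of `Q`. -/
def QAnt (Q : Set (Ent Chan M)) (p : Behav Chan) : Prop := ∃ x, (p, x) ∈ Q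

section EP

variable [DecidableEq Chan]

/-- EP-1: every `Q`-antecedent is `Q`-justified. -/
def EP1 (S : Setting At Chan) (Q : Set (Ent Chan M)) : Prop :=
  ∀ p, QAnt Q p → Justified S Q p

/-- EP-2: compatible entailments with equal channel behaviour on the output
channel conclude the same output event. -/
def EP2 (Q : Set (Ent Chan M)) : Prop :=
  ∀ (p q : Behav Chan) (α : Chan) (a b : ℕ),
    (p, Concl.out α a) ∈ Q → (q, Concl.out α b) ∈ Q → p α = q α → Compat p q → a = b

/-- EP-3: between a preantecedent and a saturated preantecedent above it along
inputs there is a `Q`-antecedent. -/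
def EP3 (S : Setting At Chan) (Q : Set (Ent Chan M)) : Prop :=
  ∀ p q, Preant S Q p → Preant S Q q → S.Saturated q → BPrefixI p q →
    ∃ p', QAnt Q p' ∧ BPrefixI p p' ∧ BPrefixI p' q

/-- EP-4. -/
def EP4 (Q : Set (Ent Chan M)) : Prop :=
  ∀ (α β : Chan) (a b : ℕ) (p q : Behav Chan), α ≠ β →
    (p, Concl.out α a) ∈ Q → (q, Concl.out β b) ∈ Q → p α = q α → BPrefix p q →
    (bapp q α (Dir.out, a), Concl.out β b) ∈ Q

/-- EP-5. -/
def EP5 (S : Setting At Chan) (Q : Set (Ent Chan M)) : Prop :=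
  ∀ (α β : Chan) (a b : ℕ) (p : Behav Chan), α ≠ β →
    (p, Concl.out α a) ∈ Q → β ∈ S.active → S.CanStep p β (Dir.inp, b) →
    (bapp p β (Dir.inp, b), Concl.out α a) ∈ Q

/-- EP-6. -/
def EP6 (Q : Set (Ent Chan M)) : Prop :=
  ∀ (α β : Chan) (a b : ℕ) (p : Behav Chan), α ≠ β →
    (bapp p β (Dir.out, b), Concl.out α a) ∈ Q → (p, Concl.out α a) ∈ Q

/-- EP-7. -/
def EP7 (S : Setting At Chan) (Q : Set (Ent Chan M)) : Prop :=
  ∀ (α β : Chan) (a : ℕ) (p : Behav Chan), α ≠ β → Preant S Q p → β ∈ S.active →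
    (∃ b, S.CanStep p β (Dir.inp, b)) →
    (∀ b, S.CanStep p β (Dir.inp, b) → (bapp p β (Dir.inp, b), Concl.out α a) ∈ Q) →
    (p, Concl.out α a) ∈ Q

/-- A proto-process: a set of entailments satisfying EP-1, EP-2 and EP-3. -/
def ProtoProcess (S : Setting At Chan) (Q : Set (Ent Chan M)) : Prop :=
  EntSet S Q ∧ EP1 S Q ∧ EP2 Q ∧ EP3 S Q

/-- An extensional process: a set of entailments satisfying EP-1 – EP-7. -/
def ExtProcess (S : Setting At Chan) (Q : Set (Ent Chan M)) : Prop :=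
  ProtoProcess S Q ∧ EP4 Q ∧ EP5 S Q ∧ EP6 Q ∧ EP7 S Q

end EP

/-!
Induction on the gap `|q| - |p|` between the sizes of the two behaviours. If `p ≠ q`, look at the
first event `e` of `q` beyond `p` on some channel `β ≠ α`. An input is absorbed by EP-5. An
output `β̄[b]` is justified in `q` by some `u ⊢ β̄[b]` with `u_β = p_β`; the join `m = p ⊔ u` is a
preantecedent strictly below `q`, so induction gives `m ⊢ ᾱ[a]`, EP-4 then gives
`m * β̄[b] ⊢ ᾱ[a]`, and induction applies once more between `m * β̄[b]` and `q`.
-/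

variable {At Chan M : Type}

lemma StepsP.of_append {s : Side} {P P₂ : Proto At} {l₁ l₂ : List Ev}
    (h : StepsP s P (l₁ ++ l₂) P₂) : ∃ P₁, StepsP s P l₁ P₁ ∧ StepsP s P₁ l₂ P₂ := by
  induction l₁ generalizing P with
  | nil => exact ⟨P, .nil P, h⟩
  | cons e l ih =>
    cases h with
    | cons hstep hrest =>
      obtain ⟨P₁, h₁, h₂⟩ := ih hrest
      exact ⟨P₁, .cons hstep h₁, h₂⟩

lemma Setting.IsBehav.of_bPrefix {S : Setting At Chan} {p q : Behav Chan}
    (hq : S.IsBehav q) (hpq : BPrefix p q) : S.IsBehav p := by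
  refine ⟨fun c hc => List.prefix_nil.mp (hq.1 c hc ▸ hpq c), fun c hc => ?_⟩
  obtain ⟨P, hP⟩ := hq.2 c hc
  obtain ⟨t, ht⟩ := hpq c
  rw [Setting.Reaches, ← ht] at hP
  obtain ⟨P₁, h₁, -⟩ := StepsP.of_append hP
  exact ⟨P₁, h₁⟩

lemma Setting.IsBehav.canStep {S : Setting At Chan} {p q : Behav Chan} {β : Chan} {e : Ev}
    {r : List Ev} (hq : S.IsBehav q) (hβ : β ∈ S.active) (h : q β = p β ++ e :: r) :
    S.CanStep p β e := by
  obtain ⟨P, hP⟩ := hq.2 β hβ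
  rw [Setting.Reaches, h] at hP
  obtain ⟨P₁, h₁, hstep⟩ := StepsP.of_append hP
  cases hstep with
  | cons hstep _ => exact ⟨P₁, _, h₁, hstep⟩

lemma BPrefix.trans {p q r : Behav Chan} (hpq : BPrefix p q) (hqr : BPrefix q r) :
    BPrefix p r := fun c => (hpq c).trans (hqr c)

lemma BPrefix.exists_next {S : Setting At Chan} {p q : Behav Chan} (hp : S.IsBehav p)
    (hq : S.IsBehav q) (hpq : BPrefix p q) (hne : p ≠ q) :
    ∃ β ∈ S.active, ∃ e r, q β = p β ++ e :: r := by
  obtain ⟨β, hβ⟩ := Function.ne_iff.mp hne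
  have hβS : β ∈ S.active := by
    by_contra hβS
    exact hβ (by rw [hp.1 β hβS, hq.1 β hβS])
  obtain ⟨t, ht⟩ := hpq β
  cases t with
  | nil => exact absurd (by simpa using ht) hβ
  | cons e r => exact ⟨β, hβS, e, r, ht.symm⟩

section Append

variable [DecidableEq Chan]

@[simp]
lemma bapp_self (p : Behav Chan) (c : Chan) (e : Ev) : bapp p c e c = p c ++ [e] :=
  Function.update_self _ _ _

lemma bapp_of_ne (p : Behav Chan) {c c' : Chan} (e : Ev) (h : c' ≠ c) : bapp p c e c' = p c' :=
  Function.update_of_ne h _ _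

lemma bPrefix_bapp (p : Behav Chan) (c : Chan) (e : Ev) : BPrefix p (bapp p c e) := by
  intro c'
  by_cases hc : c' = c
  · subst hc
    simp
  · rw [bapp_of_ne _ _ hc]

lemma BPrefix.bapp_of_append {p q : Behav Chan} {c : Chan} {e : Ev} {r : List Ev}
    (hpq : BPrefix p q) (h : q c = p c ++ e :: r) : BPrefix (bapp p c e) q := by
  intro c'
  by_cases hc : c' = c
  · subst hc
    exact ⟨r, by simp [h]⟩
  · rw [bapp_of_ne _ _ hc]
    exact hpq c'

end Append

noncomputable def bsize (S : Setting At Chan) (p : Behav Chan) : ℕ :=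
  ∑ c ∈ S.finite.toFinset, (p c).length

lemma bsize_mono {S : Setting At Chan} {p q : Behav Chan} (h : BPrefix p q) :
    bsize S p ≤ bsize S q :=
  Finset.sum_le_sum fun c _ => (h c).length_le

lemma bsize_lt {S : Setting At Chan} {p q : Behav Chan} (h : BPrefix p q) {β : Chan}
    (hβ : β ∈ S.active) (hne : p β ≠ q β) : bsize S p < bsize S q :=
  Finset.sum_lt_sum (fun c _ => (h c).length_le) ⟨β, S.finite.mem_toFinset.mpr hβ,
    lt_of_le_of_ne (h β).length_le fun hl => hne ((h β).eq_of_length hl)⟩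

lemma bsize_lt_bapp [DecidableEq Chan] (S : Setting At Chan) (p : Behav Chan) {β : Chan}
    (hβ : β ∈ S.active) (e : Ev) : bsize S p < bsize S (bapp p β e) :=
  bsize_lt (bPrefix_bapp p β e) hβ (by simp)

section Join

variable {p u q : Behav Chan}

lemma bjoin_eq_or (p u : Behav Chan) (c : Chan) : bjoin p u c = p c ∨ bjoin p u c = u c := by
  unfold bjoin
  split_ifs <;> simp

lemma bjoin_apply_of_prefix {c : Chan} (h : u c <+: p c) : bjoin p u c = p c := by
  unfold bjoin
  split_ifs with hl
  · exact h.eq_of_length (le_antisymm h.length_le hl)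
  · rfl

lemma bPrefix_bjoin_left (hpq : BPrefix p q) (huq : BPrefix u q) : BPrefix p (bjoin p u) := by
  intro c
  unfold bjoin
  split_ifs with hl
  · exact List.prefix_of_prefix_length_le (hpq c) (huq c) hl
  · exact List.prefix_refl _

lemma bPrefix_bjoin_right (hpq : BPrefix p q) (huq : BPrefix u q) : BPrefix u (bjoin p u) := by
  intro c
  unfold bjoin
  split_ifs with hl
  · exact List.prefix_refl _
  · exact List.prefix_of_prefix_length_le (huq c) (hpq c) (le_of_not_ge hl)

lemma bjoin_bPrefix (hpq : BPrefix p q) (huq : BPrefix u q) : BPrefix (bjoin p u) q := by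
  intro c
  rcases bjoin_eq_or p u c with h | h <;> rw [h]
  exacts [hpq c, huq c]

variable [DecidableEq Chan] {S : Setting At Chan} {Q : Set (Ent Chan M)}

lemma Preant.join (hp : Preant S Q p) (hu : Preant S Q u) (hq : S.IsBehav q)
    (hpq : BPrefix p q) (huq : BPrefix u q) : Preant S Q (bjoin p u) := by
  have hpj := bPrefix_bjoin_left hpq huq
  have huj := bPrefix_bjoin_right hpq huq
  refine ⟨⟨hq.of_bPrefix (bjoin_bPrefix hpq huq), fun c hc P hP => ?_⟩,
    fun c hc l a r hsplit => ?_⟩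
  · rcases bjoin_eq_or p u c with h | h <;> rw [Setting.Reaches, h] at hP
    exacts [hp.1.2 c hc P hP, hu.1.2 c hc P hP]
  · rcases bjoin_eq_or p u c with h | h
    · obtain ⟨w, hwQ, hwc, hwp⟩ := hp.2 c hc l a r (h ▸ hsplit)
      exact ⟨w, hwQ, hwc, hwp.trans hpj⟩
    · obtain ⟨w, hwQ, hwc, hwp⟩ := hu.2 c hc l a r (h ▸ hsplit)
      exact ⟨w, hwQ, hwc, hwp.trans huj⟩

end Join

section Climb

variable [DecidableEq Chan] {S : Setting At Chan} {Q : Set (Ent Chan M)}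

lemma preant_of_mem (hQ : EntSet S Q) (h1 : EP1 S Q) {p : Behav Chan} {x : Concl Chan M}
    (hpQ : (p, x) ∈ Q) : Preant S Q p := by
  refine ⟨?_, h1 p ⟨x, hpQ⟩⟩
  have hvalid := hQ _ hpQ
  cases x <;> exact hvalid.1

theorem out_mem_of_preant_of_bPrefix (hQ : EntSet S Q) (h1 : EP1 S Q) (h4 : EP4 Q)
    (h5 : EP5 S Q) {p q : Behav Chan} {α : Chan} {a : ℕ} (hpQ : (p, Concl.out α a) ∈ Q)
    (hq : Preant S Q q) (hpq : BPrefix p q) (hα : p α = q α) : (q, Concl.out α a) ∈ Q := by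
  have hp : Preant S Q p := preant_of_mem hQ h1 hpQ
  by_cases hpq_eq : p = q
  · exact hpq_eq ▸ hpQ
  obtain ⟨β, hβ, ⟨d, b⟩, r, hqβ⟩ := hpq.exists_next hp.1.1 hq.1.1 hpq_eq
  have hβα : β ≠ α := by
    rintro rfl
    simp [hα] at hqβ
  cases d with
  | inp =>
    have hp'Q := h5 α β a b p hβα.symm hpQ hβ (hq.1.1.canStep hβ hqβ)
    have hp'q := hpq.bapp_of_append hqβ
    have hp_lt := bsize_lt_bapp S p hβ (.inp, b)
    have hp'_le := bsize_mono (S := S) hp'q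
    exact out_mem_of_preant_of_bPrefix hQ h1 h4 h5 hp'Q hq hp'q
      (by rw [bapp_of_ne _ _ hβα.symm, hα])
  | out =>
    obtain ⟨u, huQ, huβ, hub⟩ := hq.2 β hβ (p β) b r hqβ
    have huq : BPrefix u q := (bPrefix_bapp u β _).trans hub
    obtain ⟨m, hpm, hum, hmq, hmβ, hmα, hm⟩ : ∃ m, BPrefix p m ∧ BPrefix u m ∧ BPrefix m q ∧
        m β = p β ∧ m α = p α ∧ Preant S Q m :=
      ⟨bjoin p u, bPrefix_bjoin_left hpq huq, bPrefix_bjoin_right hpq huq, bjoin_bPrefix hpq huq,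
        bjoin_apply_of_prefix (huβ ▸ List.prefix_refl _), bjoin_apply_of_prefix (hα ▸ huq α),
        hp.join (preant_of_mem hQ h1 huQ) hq.1.1 hpq huq⟩
    have hp_le := bsize_mono (S := S) hpm
    have hm_lt := bsize_lt (S := S) hmq hβ (by rw [hmβ, hqβ]; simp)
    have hmQ := out_mem_of_preant_of_bPrefix hQ h1 h4 h5 hpQ hm hpm hmα.symm
    have hm'Q := h4 β α b a u m hβα huQ hmQ (by rw [huβ, hmβ]) hum
    have hm'q := hmq.bapp_of_append (hmβ ▸ hqβ)
    have hm_lt' := bsize_lt_bapp S m hβ (.out, b)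
    have hm'_le := bsize_mono (S := S) hm'q
    exact out_mem_of_preant_of_bPrefix hQ h1 h4 h5 hm'Q hq hm'q
      (by rw [bapp_of_ne _ _ hβα.symm, hmα, hα])
termination_by bsize S q - bsize S p
decreasing_by all_goals omega

end Climb

theorem do_it_before {At Chan M : Type} [DecidableEq Chan]
    (S : Setting At Chan) (Q : Set (Ent Chan M))
    (hQ : EntSet S Q) (h1 : EP1 S Q) (h4 : EP4 Q) (h5 : EP5 S Q) :
    ∀ (p q : Behav Chan) (α : Chan) (a : ℕ),
      (p, Concl.out α a) ∈ Q → Preant S Q q → BPrefix p q → p α = q α →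
      (q, Concl.out α a) ∈ Q :=
  fun _ _ _ _ => out_mem_of_preant_of_bPrefix hQ h1 h4 h5

end Stmt10
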